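/- Let s > 0 and let λ_{n,l} be as in the spectral formula for the linearized Boltzmann operator with angular kernel β supported in [0, π/4] and β nonnegative with ∫₀^{π/4} β(θ) θ² dθ > 0. Then λ_{n,l} = 0 if n + l ≤ 1, and λ_{n,l} > 0 if n + l ≥ 2. -/

import Mathlib

/-! For `n + l ≤ 1` the integrand vanishes identically because `P₀ = 1`, `P₁ = X` and
`sin² θ + cos² θ = 1`. For `n + l ≥ 2` it is at least `θ² / π²` on `(0, π/4]`. The key input is
`|P_l| ≤ 1` on `(-1, 1)`: by Rodrigues' formula this is Cauchy's estimate for `(z² - 1)^l` on the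
circle of radius `r = √(1 - x²)` about `x`, on which `|z² - 1| ≤ 2r`. Then, with `s = sin θ ≤ √2/2`
and `2n + l ≥ 3`, the integrand is at least `1 - s³ - cos² θ = s² (1 - s) ≥ s² / 4 ≥ θ² / π²`
(Jordan's inequality); in the remaining case `(n, l) = (0, 2)` the integrand is
`3 sin² θ cos² θ`. -/

open Real MeasureTheory

/-- The l-th Legendre polynomial via the Rodrigues formula. -/
noncomputable def legendreP (l : ℕ) (x : ℝ) : ℝ :=
  (1 / (2 ^ l * (l.factorial : ℝ))) * iteratedDeriv l (fun y : ℝ => (y ^ 2 - 1) ^ l) x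

open Polynomial
open scoped Nat

theorem Polynomial.iteratedDeriv_eval {𝕜 : Type*} [NontriviallyNormedField 𝕜] (p : 𝕜[X])
    (n : ℕ) : iteratedDeriv n (fun x => p.eval x) = fun x => (derivative^[n] p).eval x := by
  induction n with
  | zero => simp
  | succ n ih =>
    ext x
    rw [iteratedDeriv_succ, ih, Function.iterate_succ_apply']
    exact Polynomial.deriv _

theorem iteratedDeriv_rodrigues {𝕜 : Type*} [NontriviallyNormedField 𝕜] (l : ℕ) :
    iteratedDeriv l (fun y : 𝕜 => (y ^ 2 - 1) ^ l)
      = fun y => (derivative^[l] ((X ^ 2 - 1) ^ l : 𝕜[X])).eval y := by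
  rw [← Polynomial.iteratedDeriv_eval]
  simp

theorem iteratedDeriv_rodrigues_ofReal (l : ℕ) (x : ℝ) :
    iteratedDeriv l (fun z : ℂ => (z ^ 2 - 1) ^ l) x
      = ((iteratedDeriv l (fun y : ℝ => (y ^ 2 - 1) ^ l) x : ℝ) : ℂ) := by
  have hmap : ((X ^ 2 - 1) ^ l : ℂ[X]) = ((X ^ 2 - 1) ^ l : ℝ[X]).map (algebraMap ℝ ℂ) := by
    simp
  simp only [iteratedDeriv_rodrigues, hmap, iterate_derivative_map, eval_map_algebraMap]
  exact aeval_algebraMap_apply ℂ x _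

theorem legendreP_eq_eval (l : ℕ) (x : ℝ) :
    legendreP l x = (2 ^ l * l ! : ℝ)⁻¹ * (derivative^[l] ((X ^ 2 - 1) ^ l : ℝ[X])).eval x := by
  rw [legendreP, iteratedDeriv_rodrigues, one_div]

theorem legendreP_zero (x : ℝ) : legendreP 0 x = 1 := by
  simp [legendreP_eq_eval]

theorem legendreP_one (x : ℝ) : legendreP 1 x = x := by
  norm_num [legendreP_eq_eval]
  ring

theorem legendreP_two (x : ℝ) : legendreP 2 x = (3 * x ^ 2 - 1) / 2 := by
  have h : ((X : ℝ[X]) ^ 2 - 1) ^ 2 = X ^ 4 - C 2 * X ^ 2 + 1 := by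
    simp only [map_ofNat]; ring
  norm_num [legendreP_eq_eval, h]
  ring

theorem norm_sq_sub_one_le_of_mem_sphere {x r : ℝ} (hxr : x ^ 2 + r ^ 2 = 1) {z : ℂ}
    (hz : z ∈ Metric.sphere (x : ℂ) r) : ‖z ^ 2 - 1‖ ≤ 2 * r := by
  have hr : 0 ≤ r := hz ▸ dist_nonneg
  have hdist : (z.re - x) ^ 2 + z.im ^ 2 = r ^ 2 := by
    rw [mem_sphere_iff_norm, ← sq_eq_sq₀ (norm_nonneg _) hr, Complex.sq_norm,
      Complex.normSq_apply] at hz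
    simpa [sq] using hz
  have hsq : ‖z ^ 2 - 1‖ ^ 2 = 4 * r ^ 2 * (x ^ 2 + z.im ^ 2) := by
    rw [Complex.sq_norm, Complex.normSq_apply]
    simp only [Complex.sub_re, Complex.sub_im, sq, Complex.mul_re, Complex.mul_im,
      Complex.one_re, Complex.one_im]
    linear_combination
      (z.re ^ 2 + z.im ^ 2 + 1 - 2 * r ^ 2 + 2 * z.re * x) * hdist
        + (3 * z.re ^ 2 - z.im ^ 2 - 1 - 2 * r ^ 2 - 2 * z.re * x) * hxr
  have him : z.im ^ 2 ≤ r ^ 2 := by nlinarith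
  refine (pow_le_pow_iff_left₀ (norm_nonneg _) (by positivity) two_ne_zero).mp ?_
  rw [hsq]
  nlinarith

theorem abs_iteratedDeriv_rodrigues_le {x : ℝ} (hx : |x| < 1) (l : ℕ) :
    |iteratedDeriv l (fun y : ℝ => (y ^ 2 - 1) ^ l) x| ≤ (l ! : ℝ) * 2 ^ l := by
  set r := √(1 - x ^ 2)
  have hx2 : x ^ 2 < 1 := sq_lt_one_iff_abs_lt_one x |>.mpr hx
  have hr : 0 < r := sqrt_pos.mpr (by linarith)
  have hxr : x ^ 2 + r ^ 2 = 1 := by rw [sq_sqrt (by linarith)]; ring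
  have hdiff : DiffContOnCl ℂ (fun z : ℂ => (z ^ 2 - 1) ^ l) (Metric.ball (x : ℂ) r) :=
    (((differentiable_pow 2).sub_const 1).pow l).diffContOnCl
  have hcauchy := Complex.norm_iteratedDeriv_le_of_forall_mem_sphere_norm_le l hr hdiff
    fun z hz => by
      rw [norm_pow]
      exact pow_le_pow_left₀ (norm_nonneg _) (norm_sq_sub_one_le_of_mem_sphere hxr hz) l
  rw [iteratedDeriv_rodrigues_ofReal, Complex.norm_real, Real.norm_eq_abs, mul_pow,
    mul_div_assoc, mul_div_cancel_right₀ _ (pow_pos hr l).ne'] at hcauchy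
  exact hcauchy

theorem abs_legendreP_le_one {x : ℝ} (hx : |x| < 1) (l : ℕ) : |legendreP l x| ≤ 1 := by
  rw [legendreP, abs_mul, abs_of_pos (by positivity), one_div_mul_eq_div,
    div_le_one (by positivity), mul_comm]
  exact abs_iteratedDeriv_rodrigues_le hx l

theorem pow_mul_legendreP_le_pow {x : ℝ} (hx0 : 0 ≤ x) (hx1 : x < 1) {k m : ℕ} (hkm : k ≤ m)
    (l : ℕ) : x ^ m * legendreP l x ≤ x ^ k :=
  calc x ^ m * legendreP l x ≤ x ^ m * 1 := by
        gcongr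
        exact le_of_abs_le (abs_legendreP_le_one (abs_lt.mpr ⟨by linarith, hx1⟩) l)
    _ ≤ x ^ k := by rw [mul_one]; exact pow_le_pow_of_le_one hx0 hx1.le hkm

noncomputable def lambdaIntegrand (n l : ℕ) (θ : ℝ) : ℝ :=
  1 + (if n = 0 ∧ l = 0 then (1 : ℝ) else 0)
    - sin θ ^ (2 * n + l) * legendreP l (sin θ) - cos θ ^ (2 * n + l) * legendreP l (cos θ)

theorem lambdaIntegrand_eq_zero {n l : ℕ} (hnl : n + l ≤ 1) (θ : ℝ) :
    lambdaIntegrand n l θ = 0 := by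
  obtain ⟨rfl, rfl⟩ | ⟨rfl, rfl⟩ | ⟨rfl, rfl⟩ :
      (n = 0 ∧ l = 0) ∨ (n = 1 ∧ l = 0) ∨ (n = 0 ∧ l = 1) := by
    omega
  · simp [lambdaIntegrand, legendreP_zero]
  · simp only [lambdaIntegrand, one_ne_zero, and_true, ↓reduceIte, add_zero, mul_one,
      legendreP_zero]
    linear_combination -sin_sq_add_cos_sq θ
  · simp only [lambdaIntegrand, one_ne_zero, and_false, ↓reduceIte, add_zero, mul_zero, zero_add,
      pow_one, legendreP_one]
    linear_combination -sin_sq_add_cos_sq θ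

theorem lambdaIntegrand_zero_two (θ : ℝ) :
    lambdaIntegrand 0 2 θ = 3 * sin θ ^ 2 * cos θ ^ 2 := by
  simp only [lambdaIntegrand, legendreP_two]
  norm_num
  linear_combination (-(3 / 2) * (sin θ ^ 2 + cos θ ^ 2) - 1) * sin_sq_add_cos_sq θ

theorem sin_sq_div_four_le_lambdaIntegrand {θ : ℝ} (hθ : θ ∈ Set.Ioc 0 (π / 4)) {n l : ℕ}
    (hnl : 2 ≤ n + l) : sin θ ^ 2 / 4 ≤ lambdaIntegrand n l θ := by
  obtain ⟨hθ0, hθπ⟩ := hθ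
  have hs0 : 0 < sin θ := sin_pos_of_pos_of_lt_pi hθ0 (by linarith [pi_pos])
  have hc0 : 0 < cos θ := cos_pos_of_mem_Ioo ⟨by linarith, by linarith [pi_pos]⟩
  have hs : sin θ ≤ √2 / 2 :=
    sin_pi_div_four ▸ sin_le_sin_of_le_of_le_pi_div_two (by linarith) (by linarith [pi_pos]) hθπ
  have hc : √2 / 2 ≤ cos θ :=
    cos_pi_div_four ▸ cos_le_cos_of_nonneg_of_le_pi hθ0.le (by linarith [pi_pos]) hθπ
  have hsqrt2 : √2 ^ 2 = 2 := sq_sqrt zero_le_two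
  have hsc := sin_sq_add_cos_sq θ
  by_cases h02 : n = 0 ∧ l = 2
  · obtain ⟨rfl, rfl⟩ := h02
    have hc2 : 1 / 2 ≤ cos θ ^ 2 := by nlinarith
    rw [lambdaIntegrand_zero_two]
    nlinarith [mul_le_mul_of_nonneg_left hc2 (sq_nonneg (sin θ))]
  · have hm : 3 ≤ 2 * n + l := by omega
    have hsin := pow_mul_legendreP_le_pow hs0.le (by nlinarith) hm l
    have hcos := pow_mul_legendreP_le_pow hc0.le (by nlinarith) (by omega : 2 ≤ 2 * n + l) l
    have hif : (if n = 0 ∧ l = 0 then (1 : ℝ) else 0) = 0 := if_neg (by omega)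
    have hs34 : sin θ ≤ 3 / 4 := by nlinarith
    rw [lambdaIntegrand, hif]
    nlinarith [mul_nonneg (sq_nonneg (sin θ)) (sub_nonneg.2 hs34)]

theorem inv_pi_sq_mul_sq_le_lambdaIntegrand {θ : ℝ} (hθ : θ ∈ Set.Ioc 0 (π / 4)) {n l : ℕ}
    (hnl : 2 ≤ n + l) : (π ^ 2)⁻¹ * θ ^ 2 ≤ lambdaIntegrand n l θ := by
  have hjordan : 2 / π * θ ≤ sin θ := mul_le_sin hθ.1.le (by linarith [hθ.2, pi_pos])
  have hsq : (2 / π * θ) ^ 2 ≤ sin θ ^ 2 := pow_le_pow_left₀ (by positivity [hθ.1.le]) hjordan 2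
  calc (π ^ 2)⁻¹ * θ ^ 2 = (2 / π * θ) ^ 2 / 4 := by field_simp; ring
    _ ≤ sin θ ^ 2 / 4 := by gcongr
    _ ≤ lambdaIntegrand n l θ := sin_sq_div_four_le_lambdaIntegrand hθ hnl

theorem setIntegral_mul_pos_of_const_mul_le {α : Type*} [MeasurableSpace α] {μ : Measure α}
    {s : Set α} (hs : MeasurableSet s) {w f g : α → ℝ} {c : ℝ} (hc : 0 < c)
    (hw : ∀ x ∈ s, 0 ≤ w x) (hg : 0 < ∫ x in s, w x * g x ∂μ)
    (hf : IntegrableOn (fun x => w x * f x) s μ) (hgf : ∀ x ∈ s, c * g x ≤ f x) :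
    0 < ∫ x in s, w x * f x ∂μ := by
  have hg_int : IntegrableOn (fun x => w x * g x) s μ := by
    by_contra h
    rw [integral_undef h] at hg
    exact hg.false
  calc 0 < c * ∫ x in s, w x * g x ∂μ := mul_pos hc hg
    _ = ∫ x in s, c * (w x * g x) ∂μ := (integral_const_mul c _).symm
    _ ≤ ∫ x in s, w x * f x ∂μ := by
      refine setIntegral_mono_on (hg_int.const_mul c) hf hs fun x hx => ?_
      calc c * (w x * g x) = w x * (c * g x) := by ring
        _ ≤ w x * f x := mul_le_mul_of_nonneg_left (hgf x hx) (hw x hx)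

theorem stmt_8_general (β : ℝ → ℝ)
    (hβnonneg : ∀ θ ∈ Set.Ioc (0 : ℝ) (π / 4), 0 ≤ β θ)
    (hβpos : 0 < ∫ θ in Set.Ioc (0 : ℝ) (π / 4), β θ * θ ^ 2)
    (hβint : ∀ n l : ℕ, MeasureTheory.IntegrableOn
      (fun θ : ℝ => β θ * (1 + (if n = 0 ∧ l = 0 then (1 : ℝ) else 0)
        - (Real.sin θ) ^ (2 * n + l) * legendreP l (Real.sin θ)
        - (Real.cos θ) ^ (2 * n + l) * legendreP l (Real.cos θ)))
      (Set.Ioc (0 : ℝ) (π / 4)))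
    (lam : ℕ → ℕ → ℝ)
    (hlam : ∀ n l : ℕ, lam n l =
      ∫ θ in Set.Ioc (0 : ℝ) (π / 4),
        β θ * (1 + (if n = 0 ∧ l = 0 then (1 : ℝ) else 0)
          - (Real.sin θ) ^ (2 * n + l) * legendreP l (Real.sin θ)
          - (Real.cos θ) ^ (2 * n + l) * legendreP l (Real.cos θ))) :
    ∀ n l : ℕ, (n + l ≤ 1 → lam n l = 0) ∧ (2 ≤ n + l → 0 < lam n l) := by
  intro n l
  have hlam' : lam n l = ∫ θ in Set.Ioc 0 (π / 4), β θ * lambdaIntegrand n l θ := hlam n l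
  refine ⟨fun hnl => ?_, fun hnl => ?_⟩
  · simp only [hlam', lambdaIntegrand_eq_zero hnl, mul_zero, integral_zero]
  · rw [hlam']
    exact setIntegral_mul_pos_of_const_mul_le measurableSet_Ioc (by positivity) hβnonneg hβpos
      (hβint n l) fun θ hθ => inv_pi_sq_mul_sq_le_lambdaIntegrand hθ hnl

/-- λ_{n,l} = 0 if n+l ≤ 1 and λ_{n,l} > 0 if n+l ≥ 2, for the
spectral formula of the linearized Boltzmann operator with nonnegative angular
kernel β supported in [0,π/4] satisfying ∫ β(θ)θ² dθ > 0. -/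
theorem stmt_8 (β : ℝ → ℝ) (hβmeas : Measurable β)
    (hβnonneg : ∀ θ ∈ Set.Ioc (0 : ℝ) (π / 4), 0 ≤ β θ)
    (hβpos : 0 < ∫ θ in Set.Ioc (0 : ℝ) (π / 4), β θ * θ ^ 2)
    (hβint : ∀ n l : ℕ, MeasureTheory.IntegrableOn
      (fun θ : ℝ => β θ * (1 + (if n = 0 ∧ l = 0 then (1 : ℝ) else 0)
        - (Real.sin θ) ^ (2 * n + l) * legendreP l (Real.sin θ)
        - (Real.cos θ) ^ (2 * n + l) * legendreP l (Real.cos θ)))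
      (Set.Ioc (0 : ℝ) (π / 4)))
    (lam : ℕ → ℕ → ℝ)
    (hlam : ∀ n l : ℕ, lam n l =
      ∫ θ in Set.Ioc (0 : ℝ) (π / 4),
        β θ * (1 + (if n = 0 ∧ l = 0 then (1 : ℝ) else 0)
          - (Real.sin θ) ^ (2 * n + l) * legendreP l (Real.sin θ)
          - (Real.cos θ) ^ (2 * n + l) * legendreP l (Real.cos θ))) :
    ∀ n l : ℕ, (n + l ≤ 1 → lam n l = 0) ∧ (2 ≤ n + l → 0 < lam n l) :=
  stmt_8_general β hβnonneg hβpos hβint lam hlam
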